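/- Let r be a positive integer and C ≥ 0 a real number. Then the set of vectors w ∈ ℤ^r for which there exist real numbers c_{ij} (for 1 ≤ j < i ≤ r) with |c_{ij}| ≤ C such that -‖w‖² ≥ Σ_{i > j} (w_i - w_j)·c_{ij} is finite, where ‖w‖ is the Euclidean norm. -/
import Mathlib


/-- The standard Euclidean norm of an integer vector `w ∈ ℤ^r`. -/
noncomputable def euclNormZ' {r : ℕ} (w : Fin r → ℤ) : ℝ :=
  Real.sqrt (∑ i, ((w i : ℝ)) ^ 2)

/-- Let `r` be a positive integer and `C ≥ 0`.  The set of vectors `w ∈ ℤ^r` for which there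
exist reals `c_{ij}` (for `j < i`) with `|c_{ij}| ≤ C` such that
`-‖w‖² ≥ Σ_{i > j} (w_i - w_j)·c_{ij}` is finite. -/
theorem finite_of_neg_norm_sq_ge_pairwise_sum (r : ℕ) (hr : 0 < r) (C : ℝ) (hC : 0 ≤ C) :
    {w : Fin r → ℤ | ∃ c : Fin r → Fin r → ℝ,
      (∀ i j : Fin r, j < i → |c i j| ≤ C) ∧
      ∑ p ∈ Finset.univ.filter (fun p : Fin r × Fin r => p.2 < p.1),
          (((w p.1 : ℝ)) - ((w p.2 : ℝ))) * c p.1 p.2 ≤ -(euclNormZ' w) ^ 2}.Finite := by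
  set N : ℤ := ⌈2 * C * (r : ℝ) ^ 2⌉ with hN
  apply Set.Finite.subset (Set.Finite.pi (fun _ : Fin r => Set.finite_Icc (-N) N))
  rintro w ⟨c, hc, hsum⟩
  set M := euclNormZ' w with hMdef
  have hM0 : 0 ≤ M := Real.sqrt_nonneg _
  have hsnn : (0:ℝ) ≤ ∑ i, ((w i : ℝ)) ^ 2 :=
    Finset.sum_nonneg fun i _ => sq_nonneg _
  have hMsq : M ^ 2 = ∑ i, ((w i : ℝ)) ^ 2 := Real.sq_sqrt hsnn
  have hcomp : ∀ i : Fin r, |(w i : ℝ)| ≤ M := by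
    intro i
    have h1 : |(w i : ℝ)| = Real.sqrt (((w i : ℝ)) ^ 2) := (Real.sqrt_sq_eq_abs _).symm
    rw [h1, hMdef, euclNormZ']
    exact Real.sqrt_le_sqrt (Finset.single_le_sum (fun j _ => sq_nonneg ((w j : ℝ))) (Finset.mem_univ i))
  -- termwise bound on the sum
  set S := Finset.univ.filter (fun p : Fin r × Fin r => p.2 < p.1) with hS
  have hterm : ∀ p ∈ S, -((((w p.1 : ℝ)) - ((w p.2 : ℝ))) * c p.1 p.2) ≤ 2 * M * C := by
    intro p hp
    have hlt : p.2 < p.1 := (Finset.mem_filter.mp hp).2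
    have h1 : |(((w p.1 : ℝ)) - ((w p.2 : ℝ))) * c p.1 p.2| ≤ (2 * M) * C := by
      rw [abs_mul]
      apply mul_le_mul _ _ (abs_nonneg _) (by positivity)
      · calc |((w p.1 : ℝ)) - ((w p.2 : ℝ))| ≤ |(w p.1 : ℝ)| + |(w p.2 : ℝ)| := abs_sub _ _
          _ ≤ M + M := add_le_add (hcomp _) (hcomp _)
          _ = 2 * M := by ring
      · exact hc _ _ hlt
    nlinarith [neg_abs_le ((((w p.1 : ℝ)) - ((w p.2 : ℝ))) * c p.1 p.2)]
  have hcard : (S.card : ℝ) ≤ (r : ℝ) ^ 2 := by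
    have h1 : S.card ≤ (Finset.univ : Finset (Fin r × Fin r)).card := Finset.card_le_card (Finset.filter_subset _ _)
    have h2 : (Finset.univ : Finset (Fin r × Fin r)).card = r * r := by simp
    have : (S.card : ℝ) ≤ ((r * r : ℕ) : ℝ) := by exact_mod_cast h1.trans_eq h2
    simpa [pow_two] using this
  have hbound : M ^ 2 ≤ 2 * C * (r : ℝ) ^ 2 * M := by
    have h1 : M ^ 2 ≤ ∑ p ∈ S, -((((w p.1 : ℝ)) - ((w p.2 : ℝ))) * c p.1 p.2) := by
      rw [Finset.sum_neg_distrib]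
      linarith [hsum]
    have h2 : ∑ p ∈ S, -((((w p.1 : ℝ)) - ((w p.2 : ℝ))) * c p.1 p.2) ≤ S.card * (2 * M * C) := by
      calc _ ≤ ∑ _p ∈ S, 2 * M * C := Finset.sum_le_sum hterm
        _ = S.card * (2 * M * C) := by rw [Finset.sum_const, nsmul_eq_mul]
    have h3 : (S.card : ℝ) * (2 * M * C) ≤ (r:ℝ)^2 * (2 * M * C) := by
      apply mul_le_mul_of_nonneg_right hcard (by positivity)
    nlinarith
  have hMle : M ≤ 2 * C * (r : ℝ) ^ 2 := by
    rcases eq_or_lt_of_le hM0 with h | h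
    · rw [← h]; positivity
    · nlinarith
  intro k _
  have hk : |(w k : ℝ)| ≤ (N : ℝ) := (hcomp k).trans (hMle.trans (Int.le_ceil _))
  rw [abs_le] at hk
  simp only [Set.mem_Icc]
  exact ⟨by exact_mod_cast hk.1, by exact_mod_cast hk.2⟩
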